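/- The space of traces on the Frohman–Gelca algebra A_t (t nonzero, not a root of unity) — i.e., ℂ-linear functionals τ : A_t → ℂ with τ(a*b) = τ(b*a) for all a, b — is a five-dimensional complex vector space. -/
import Mathlib


noncomputable section

def negRel : Setoid (ℤ × ℤ) where
  r v w := v = w ∨ v = -w
  iseqv := by
    refine ⟨fun v => Or.inl rfl, ?_, ?_⟩
    · rintro v w (rfl | rfl) <;> simp
    · rintro u v w (rfl | rfl) (h | h) <;> simp_all

/-- The index set `ℤ² / ±1`. -/
abbrev Q2 := Quotient negRel

/-- The underlying vector space of the Frohman–Gelca algebra: the free `ℂ`-module on `ℤ²/±1`. -/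
abbrev FG := Q2 →₀ ℂ

/-- The basis vector `e_{(p,q)}`. -/
def e (v : ℤ × ℤ) : FG := Finsupp.single (Quotient.mk negRel v) 1

lemma e_neg (v : ℤ × ℤ) : e (-v) = e v := by
  unfold e
  congr 1
  exact Quotient.sound (Or.inr rfl)

/-- The determinant `p s - q r`. -/
def det (v w : ℤ × ℤ) : ℤ := v.1 * w.2 - v.2 * w.1

/-- Product-to-sum formula on representatives. -/
def mulB (t : ℂ) (v w : ℤ × ℤ) : FG :=
  t ^ (det v w) • e (v + w) + t ^ (-(det v w)) • e (v - w)

lemma mulB_negL (t : ℂ) (v w : ℤ × ℤ) : mulB t (-v) w = mulB t v w := by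
  unfold mulB
  have hd : det (-v) w = -(det v w) := by simp [det]; ring
  rw [hd, neg_neg, show -v + w = -(v - w) by abel, show -v - w = -(v + w) by abel,
    e_neg, e_neg, add_comm]

lemma mulB_negR (t : ℂ) (v w : ℤ × ℤ) : mulB t v (-w) = mulB t v w := by
  unfold mulB
  have hd : det v (-w) = -(det v w) := by simp [det]; ring
  rw [hd, neg_neg, show v + -w = v - w by abel, show v - -w = v + w by abel, add_comm]

/-- Product-to-sum formula on the quotient `ℤ²/±1`. -/
def qmulB (t : ℂ) : Q2 → Q2 → FG :=
  Quotient.lift₂ (mulB t) (by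
    rintro a b a' b' (rfl | rfl) (rfl | rfl)
    · rfl
    · rw [mulB_negR]
    · rw [mulB_negL]
    · rw [mulB_negL, mulB_negR])

/-- Multiplication in the Frohman–Gelca algebra, extended bilinearly. -/
def fgMul (t : ℂ) (a b : FG) : FG :=
  a.sum fun x c => b.sum fun y d => (c * d) • qmulB t x y

/-- The span of commutators `C(A_t)`. -/
def commSpan (t : ℂ) : Submodule ℂ FG :=
  Submodule.span ℂ {x | ∃ a b : FG, x = fgMul t a b - fgMul t b a}


/-- The space of traces on the Frohman–Gelca algebra. -/
def traceSpace (t : ℂ) : Submodule ℂ (FG →ₗ[ℂ] ℂ) where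
  carrier := {τ | ∀ a b : FG, τ (fgMul t a b) = τ (fgMul t b a)}
  add_mem' := by intro f g hf hg a b; simp [hf a b, hg a b]
  zero_mem' := by intro a b; simp
  smul_mem' := by intro c f hf a b; simp [hf a b]


/-! ### Auxiliary development -/

/-- The class of a lattice point among the five trace classes. -/
def cls (v : ℤ × ℤ) : Fin 5 :=
  if v = 0 then 0
  else if v.1 % 2 = 0 then (if v.2 % 2 = 0 then 1 else 3)
  else (if v.2 % 2 = 0 then 2 else 4)

lemma cls_neg (v : ℤ × ℤ) : cls (-v) = cls v := by
  unfold cls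
  have h0 : (-v = 0) ↔ (v = 0) := neg_eq_zero
  have h1 : ((-v).1 % 2 = 0) ↔ (v.1 % 2 = 0) := by
    have : (-v).1 = -v.1 := rfl
    omega
  have h2 : ((-v).2 % 2 = 0) ↔ (v.2 % 2 = 0) := by
    have : (-v).2 = -v.2 := rfl
    omega
  simp only [h0, h1, h2]

/-- `cls` on the quotient. -/
def clsQ : Q2 → Fin 5 :=
  Quotient.lift cls (by
    rintro a b (rfl | rfl)
    · rfl
    · exact cls_neg b)

def rep : Fin 5 → ℤ × ℤ := ![(0, 0), (2, 0), (1, 0), (0, 1), (1, 1)]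

lemma det_self_neg (v : ℤ × ℤ) : det v (-v) = 0 := by
  unfold det
  have h1 : (-v).1 = -v.1 := rfl
  have h2 : (-v).2 = -v.2 := rfl
  rw [h1, h2]; ring

lemma cls_add_sub (v w : ℤ × ℤ) (h : det v w ≠ 0) : cls (v + w) = cls (v - w) := by
  have h1 : v + w ≠ 0 := by
    intro hz
    exact h (by rw [eq_neg_of_add_eq_zero_right hz]; exact det_self_neg v)
  have h2 : v - w ≠ 0 := by
    intro hz
    have : w = v := (sub_eq_zero.mp hz).symm
    apply h; rw [this]; unfold det; ring
  have a1 : (v + w).1 = v.1 + w.1 := rfl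
  have a2 : (v + w).2 = v.2 + w.2 := rfl
  have b1 : (v - w).1 = v.1 - w.1 := rfl
  have b2 : (v - w).2 = v.2 - w.2 := rfl
  have e1 : ((v + w).1 % 2 = 0) ↔ ((v - w).1 % 2 = 0) := by omega
  have e2 : ((v + w).2 % 2 = 0) ↔ ((v - w).2 % 2 = 0) := by omega
  unfold cls
  rw [if_neg h1, if_neg h2]
  simp only [e1, e2]

lemma mulB_symm (t : ℂ) (v w : ℤ × ℤ) :
    mulB t w v = t ^ (-(det v w)) • e (v + w) + t ^ (det v w) • e (v - w) := by
  unfold mulB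
  have hd : det w v = -(det v w) := by unfold det; ring
  rw [hd, neg_neg, add_comm w v, show w - v = -(v - w) by abel, e_neg]

lemma fgMul_e (t : ℂ) (v w : ℤ × ℤ) : fgMul t (e v) (e w) = mulB t v w := by
  unfold fgMul e
  rw [Finsupp.sum_single_index, Finsupp.sum_single_index]
  · simp only [one_mul, one_smul]
    rfl
  · simp
  · simp

lemma zpow_ne_one (t : ℂ) (ht : t ≠ 0) (hroot : ∀ n : ℕ, 0 < n → t ^ n ≠ 1)
    {d : ℤ} (hd : d ≠ 0) : t ^ d ≠ 1 := by
  intro h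
  rcases lt_or_gt_of_ne hd with hlt | hgt
  · have hn : t ^ (-d).toNat = 1 := by
      have : t ^ (-d) = 1 := by
        rw [zpow_neg, h, inv_one]
      rw [← this, ← zpow_natCast, Int.toNat_of_nonneg (by omega)]
    exact hroot (-d).toNat (by omega) hn
  · have hn : t ^ d.toNat = 1 := by
      rw [← h, ← zpow_natCast, Int.toNat_of_nonneg (by omega)]
    exact hroot d.toNat (by omega) hn

lemma zpow_ne_zpow_neg (t : ℂ) (ht : t ≠ 0) (hroot : ∀ n : ℕ, 0 < n → t ^ n ≠ 1)
    {d : ℤ} (hd : d ≠ 0) : t ^ d ≠ t ^ (-d) := by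
  intro h
  apply zpow_ne_one t ht hroot (d := 2 * d) (by omega)
  have h2 : t ^ (2 * d) = t ^ d * t ^ d := by
    rw [two_mul, zpow_add₀ ht]
  rw [h2]
  nth_rewrite 2 [h]
  rw [← zpow_add₀ ht]
  simp

/-- Key step: a trace takes equal values on `e (v+w)` and `e (v-w)` when `det v w ≠ 0`. -/
lemma trace_step (t : ℂ) (ht : t ≠ 0) (hroot : ∀ n : ℕ, 0 < n → t ^ n ≠ 1)
    (τ : FG →ₗ[ℂ] ℂ) (hτ : ∀ a b : FG, τ (fgMul t a b) = τ (fgMul t b a))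
    (v w : ℤ × ℤ) (hd : det v w ≠ 0) : τ (e (v + w)) = τ (e (v - w)) := by
  have h := hτ (e v) (e w)
  rw [fgMul_e, fgMul_e, mulB_symm t v w] at h
  unfold mulB at h
  simp only [map_add, map_smul, smul_eq_mul] at h
  have hfac : (t ^ det v w - t ^ (-(det v w))) * (τ (e (v + w)) - τ (e (v - w))) = 0 := by
    linear_combination h
  rcases mul_eq_zero.mp hfac with h1 | h2
  · exact absurd (sub_eq_zero.mp h1) (zpow_ne_zpow_neg t ht hroot hd)
  · exact sub_eq_zero.mp h2

/-- Step on vertices: same parity and nonzero determinant. -/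
lemma trace_step' (t : ℂ) (ht : t ≠ 0) (hroot : ∀ n : ℕ, 0 < n → t ^ n ≠ 1)
    (τ : FG →ₗ[ℂ] ℂ) (hτ : ∀ a b : FG, τ (fgMul t a b) = τ (fgMul t b a))
    (x y : ℤ × ℤ) (hp1 : x.1 % 2 = y.1 % 2) (hp2 : x.2 % 2 = y.2 % 2)
    (hd : det x y ≠ 0) : τ (e x) = τ (e y) := by
  obtain ⟨a, ha⟩ : ∃ a, x.1 = y.1 + 2 * a := ⟨(x.1 - y.1) / 2, by omega⟩
  obtain ⟨b, hb⟩ : ∃ b, x.2 = y.2 + 2 * b := ⟨(x.2 - y.2) / 2, by omega⟩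
  set v : ℤ × ℤ := (y.1 + a, y.2 + b) with hv
  set w : ℤ × ℤ := (a, b) with hw
  have hx : x = v + w := by
    apply Prod.ext
    · show x.1 = y.1 + a + a; omega
    · show x.2 = y.2 + b + b; omega
  have hy : y = v - w := by
    apply Prod.ext
    · show y.1 = y.1 + a - a; ring
    · show y.2 = y.2 + b - b; ring
  have hdvw : det v w ≠ 0 := by
    intro hz
    apply hd
    show x.1 * y.2 - x.2 * y.1 = 0
    have hz' : (y.1 + a) * b - (y.2 + b) * a = 0 := hz
    rw [ha, hb]
    linear_combination -2 * hz'
  rw [hx, hy]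
  exact trace_step t ht hroot τ hτ v w hdvw

/-- Chain: any two nonzero vectors of the same parity give the same trace value. -/
lemma trace_chain (t : ℂ) (ht : t ≠ 0) (hroot : ∀ n : ℕ, 0 < n → t ^ n ≠ 1)
    (τ : FG →ₗ[ℂ] ℂ) (hτ : ∀ a b : FG, τ (fgMul t a b) = τ (fgMul t b a))
    (x y : ℤ × ℤ) (hx : x ≠ 0) (hy : y ≠ 0)
    (hp1 : x.1 % 2 = y.1 % 2) (hp2 : x.2 % 2 = y.2 % 2) : τ (e x) = τ (e y) := by
  by_cases hd : det x y ≠ 0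
  · exact trace_step' t ht hroot τ hτ x y hp1 hp2 hd
  · push_neg at hd
    have hdxy : x.1 * y.2 - x.2 * y.1 = 0 := hd
    by_cases hx1 : x.1 ≠ 0
    · have hy1 : y.1 ≠ 0 := by
        intro hz
        have hy2 : y.2 = 0 := by
          have h' : x.1 * y.2 = 0 := by linear_combination hdxy + x.2 * hz
          rcases mul_eq_zero.mp h' with h | h
          · exact absurd h hx1
          · exact h
        exact hy (Prod.ext hz hy2)
      set z : ℤ × ℤ := (x.1, x.2 + 2) with hz
      have s1 : τ (e x) = τ (e z) := by
        apply trace_step' t ht hroot τ hτ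
        · rfl
        · show x.2 % 2 = (x.2 + 2) % 2; omega
        · show x.1 * (x.2 + 2) - x.2 * x.1 ≠ 0
          intro h; apply hx1; linarith
      have s2 : τ (e z) = τ (e y) := by
        apply trace_step' t ht hroot τ hτ
        · show x.1 % 2 = y.1 % 2; exact hp1
        · show (x.2 + 2) % 2 = y.2 % 2; omega
        · show x.1 * y.2 - (x.2 + 2) * y.1 ≠ 0
          intro h; apply hy1; linarith
      rw [s1, s2]
    · push_neg at hx1
      have hx2 : x.2 ≠ 0 := by
        intro hz; exact hx (Prod.ext hx1 hz)
      have hy2 : y.2 ≠ 0 := by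
        intro hz
        have h' : x.2 * y.1 = 0 := by rw [hx1, zero_mul] at hdxy; linarith
        have hy1 : y.1 = 0 := by
          rcases mul_eq_zero.mp h' with h | h
          · exact absurd h hx2
          · exact h
        exact hy (Prod.ext hy1 hz)
      set z : ℤ × ℤ := (x.1 + 2, x.2) with hz
      have s1 : τ (e x) = τ (e z) := by
        apply trace_step' t ht hroot τ hτ
        · show x.1 % 2 = (x.1 + 2) % 2; omega
        · rfl
        · show x.1 * x.2 - x.2 * (x.1 + 2) ≠ 0
          intro h; apply hx2; linarith
      have s2 : τ (e z) = τ (e y) := by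
        apply trace_step' t ht hroot τ hτ
        · show (x.1 + 2) % 2 = y.1 % 2; omega
        · exact hp2
        · show (x.1 + 2) * y.2 - x.2 * y.1 ≠ 0
          intro h; apply hy2; linarith
      rw [s1, s2]

/-- The candidate trace attached to `c : Fin 5 → ℂ`. -/
def tauC (c : Fin 5 → ℂ) : FG →ₗ[ℂ] ℂ :=
  Finsupp.lsum ℂ fun q => LinearMap.smulRight LinearMap.id (c (clsQ q))

lemma tauC_e (c : Fin 5 → ℂ) (v : ℤ × ℤ) : tauC c (e v) = c (cls v) := by
  unfold tauC e
  rw [Finsupp.lsum_single]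
  show (1 : ℂ) • c (clsQ (Quotient.mk negRel v)) = c (cls v)
  rw [one_smul]
  rfl

lemma tau_fgMul (t : ℂ) (τ : FG →ₗ[ℂ] ℂ) (a b : FG) :
    τ (fgMul t a b) = a.sum fun x cx => b.sum fun y cy => (cx * cy) * τ (qmulB t x y) := by
  unfold fgMul
  rw [map_finsuppSum]
  refine Finsupp.sum_congr fun x _ => ?_
  rw [map_finsuppSum]
  refine Finsupp.sum_congr fun y _ => ?_
  rw [map_smul]
  rfl

lemma tauC_qmulB_symm (t : ℂ) (c : Fin 5 → ℂ) (x y : Q2) :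
    tauC c (qmulB t x y) = tauC c (qmulB t y x) := by
  induction x using Quotient.ind with
  | _ v =>
  induction y using Quotient.ind with
  | _ w =>
  show tauC c (mulB t v w) = tauC c (mulB t w v)
  rw [mulB_symm t v w]
  unfold mulB
  simp only [map_add, map_smul, smul_eq_mul, tauC_e]
  by_cases hd : det v w = 0
  · rw [hd]; ring
  · rw [cls_add_sub v w hd]; ring

lemma tauC_trace (t : ℂ) (c : Fin 5 → ℂ) (a b : FG) :
    tauC c (fgMul t a b) = tauC c (fgMul t b a) := by
  rw [tau_fgMul, tau_fgMul]
  conv_rhs => rw [Finsupp.sum_comm]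
  refine Finsupp.sum_congr fun x _ => ?_
  refine Finsupp.sum_congr fun y _ => ?_
  rw [tauC_qmulB_symm t c x y]
  ring

/-- Evaluation of traces at the five representatives. -/
def Phi (t : ℂ) : traceSpace t →ₗ[ℂ] (Fin 5 → ℂ) where
  toFun τ := fun i => (τ : FG →ₗ[ℂ] ℂ) (e (rep i))
  map_add' τ σ := by funext i; simp
  map_smul' r τ := by funext i; simp

lemma trace_e_eq_rep (t : ℂ) (ht : t ≠ 0) (hroot : ∀ n : ℕ, 0 < n → t ^ n ≠ 1)
    (τ : FG →ₗ[ℂ] ℂ) (hτ : ∀ a b : FG, τ (fgMul t a b) = τ (fgMul t b a))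
    (v : ℤ × ℤ) : τ (e v) = τ (e (rep (cls v))) := by
  by_cases h0 : v = 0
  · rw [h0]
    have : cls (0 : ℤ × ℤ) = 0 := by simp [cls]
    rw [this]
    rfl
  · have hv1 : v.1 % 2 = 0 ∨ v.1 % 2 = 1 := by omega
    have hv2 : v.2 % 2 = 0 ∨ v.2 % 2 = 1 := by omega
    rcases hv1 with h1 | h1 <;> rcases hv2 with h2 | h2
    · have hc : cls v = 1 := by simp [cls, h0, h1, h2]
      rw [hc]
      exact trace_chain t ht hroot τ hτ v (2, 0) h0 (by decide)
        (by show v.1 % 2 = (2:ℤ) % 2; omega) (by show v.2 % 2 = (0:ℤ) % 2; omega)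
    · have hc : cls v = 3 := by simp [cls, h0, h1, h2]
      rw [hc]
      exact trace_chain t ht hroot τ hτ v (0, 1) h0 (by decide)
        (by show v.1 % 2 = (0:ℤ) % 2; omega) (by show v.2 % 2 = (1:ℤ) % 2; omega)
    · have hc : cls v = 2 := by simp [cls, h0, h1, h2]
      rw [hc]
      exact trace_chain t ht hroot τ hτ v (1, 0) h0 (by decide)
        (by show v.1 % 2 = (1:ℤ) % 2; omega) (by show v.2 % 2 = (0:ℤ) % 2; omega)
    · have hc : cls v = 4 := by simp [cls, h0, h1, h2]
      rw [hc]
      exact trace_chain t ht hroot τ hτ v (1, 1) h0 (by decide)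
        (by show v.1 % 2 = (1:ℤ) % 2; omega) (by show v.2 % 2 = (1:ℤ) % 2; omega)

lemma cls_rep : ∀ i : Fin 5, cls (rep i) = i := by decide

theorem stmt11 (t : ℂ) (ht : t ≠ 0) (hroot : ∀ n : ℕ, 0 < n → t ^ n ≠ 1) :
    Module.finrank ℂ (traceSpace t) = 5 := by
  have hbij : Function.Bijective (Phi t) := by
    constructor
    · rw [← LinearMap.ker_eq_bot, LinearMap.ker_eq_bot']
      intro τ hτ0
      have hz : ∀ i : Fin 5, (τ : FG →ₗ[ℂ] ℂ) (e (rep i)) = 0 := by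
        intro i
        exact congrFun hτ0 i
      apply Subtype.ext
      apply Finsupp.lhom_ext
      intro q b
      induction q using Quotient.ind with
      | _ v =>
      have hsingle : Finsupp.single (Quotient.mk negRel v) b = b • e v := by
        simp [e, Finsupp.smul_single]
      show (τ : FG →ₗ[ℂ] ℂ) (Finsupp.single (Quotient.mk negRel v) b) = 0
      rw [hsingle, map_smul, trace_e_eq_rep t ht hroot τ τ.2 v, hz, smul_zero]
    · intro c
      refine ⟨⟨tauC c, tauC_trace t c⟩, ?_⟩
      funext i
      show tauC c (e (rep i)) = c i
      rw [tauC_e, cls_rep]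
  have hequiv : (traceSpace t) ≃ₗ[ℂ] (Fin 5 → ℂ) := LinearEquiv.ofBijective (Phi t) hbij
  rw [hequiv.finrank_eq]
  simp

end
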